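/- For the 24 points x^σ_ε = (3, 2σ+2ε, 0) and y^σ_ε = (3, 0, 2σ+2ε) in quaternionic hyperbolic plane H²_ℍ, where σ ∈ {+1,−1} and ε ∈ {±i,±j,±k}, one has ∑ d(x^σ_ε, x^ρ_δ) + ∑ d(y^σ_ε, y^ρ_δ) − ∑ d(x^σ_ε, y^ρ_δ) > 0; hence the geodesic distance on H²_ℍ is not a kernel of negative type. -/

import Mathlib

/-!
Write `a_p = 2σ + 2ε` for the twelve parameters, so `|a_p|² = 8` and all 24 points satisfy
`⟨z, z⟩ = -1`. Then `cosh d(x_p, y_q) = |⟨x_p, y_q⟩| = 9` for every mixed pair, while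
`cosh² d(x_p, x_q) = |-9 + ā_p a_q|² = 145 - 18 Re(ā_p a_q)`, and the same for the `y`'s. The
Gram entries `Re(ā_p a_q) = 4(σρ + ⟨ε, δ⟩)` take, in every row, the values `8, 0, 0, -8` and
`4, -4` four times each, so every row of distances sums to
`C = 2 arcosh √145 + arcosh 17 + 4 arcosh √73 + 4 arcosh √217`. The two same-type sums are
`6 C` each, the mixed sum is `144 arcosh 9`, and `12 C ≈ 417.03 > 415.77 ≈ 144 arcosh 9`.
Weights `+1` on the `x`'s and `-1` on the `y`'s turn the negative-type sum into twice this gap.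
-/

open Quaternion

/-- The quaternionic hermitian form `⟨z,w⟩ = −z̄⁰w⁰ + z̄¹w¹ + z̄²w²` on `ℍ³`. -/
noncomputable def qForm (z w : Fin 3 → Quaternion ℝ) : Quaternion ℝ :=
  -(star (z 0) * w 0) + star (z 1) * w 1 + star (z 2) * w 2

/-- The inverse hyperbolic cosine on `[1, ∞)`. -/
noncomputable def arcosh (x : ℝ) : ℝ := Real.log (x + Real.sqrt (x ^ 2 - 1))

/-- Geodesic distance on quaternionic hyperbolic plane `H²_ℍ`:
`cosh d(x,y) = |⟨x,y⟩| / (⟨x,x⟩⟨y,y⟩)^{1/2}` for negative vectors `x, y`. -/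
noncomputable def qhypDist (x y : Fin 3 → Quaternion ℝ) : ℝ :=
  arcosh (‖qForm x y‖ / Real.sqrt ((qForm x x).re * (qForm y y).re))

/-- The twelve quaternions `2σ + 2ε`, `σ ∈ {1,−1}`, `ε ∈ {±i, ±j, ±k}`. -/
noncomputable def qParam : Fin 12 → Quaternion ℝ :=
  ![2 + 2 * ⟨0,1,0,0⟩, 2 - 2 * ⟨0,1,0,0⟩, 2 + 2 * ⟨0,0,1,0⟩, 2 - 2 * ⟨0,0,1,0⟩,
    2 + 2 * ⟨0,0,0,1⟩, 2 - 2 * ⟨0,0,0,1⟩,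
    -2 + 2 * ⟨0,1,0,0⟩, -2 - 2 * ⟨0,1,0,0⟩, -2 + 2 * ⟨0,0,1,0⟩, -2 - 2 * ⟨0,0,1,0⟩,
    -2 + 2 * ⟨0,0,0,1⟩, -2 - 2 * ⟨0,0,0,1⟩]

open Finset

theorem sum_sum_eq_two_nsmul_sum_sum_ite_lt {ι M : Type*} [Fintype ι] [LinearOrder ι]
    [AddCommMonoid M] {f : ι → ι → M} (hsymm : ∀ p q, f p q = f q p) (hdiag : ∀ p, f p p = 0) :
    ∑ p, ∑ q, f p q = 2 • ∑ p, ∑ q, if p < q then f p q else 0 := by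
  have hsplit : ∀ p q, f p q = (if p < q then f p q else 0) + (if q < p then f q p else 0) := by
    intro p q
    rcases lt_trichotomy p q with h | rfl | h
    · simp [h, h.not_gt]
    · simp [hdiag]
    · simp [h, h.not_gt, hsymm p q]
  rw [two_nsmul, sum_congr rfl fun p _ => sum_congr rfl fun q _ => hsplit p q]
  simp only [sum_add_distrib]
  rw [sum_comm (f := fun p q => if q < p then f q p else 0)]

theorem sum_sum_append_sign_mul {α R : Type*} [CommRing R] {n : ℕ} {d : α → α → R}
    (hsymm : ∀ a b, d a b = d b a) (hdiag : ∀ a, d a a = 0) (x y : Fin n → α) :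
    ∑ i, ∑ j, Fin.append (fun _ => 1) (fun _ => -1) i *
      Fin.append (fun _ => 1) (fun _ => -1) j * d (Fin.append x y i) (Fin.append x y j) =
      2 * ((∑ p, ∑ q, if p < q then d (x p) (x q) else 0) +
        (∑ p, ∑ q, if p < q then d (y p) (y q) else 0) - ∑ p, ∑ q, d (x p) (y q)) := by
  have hxx := sum_sum_eq_two_nsmul_sum_sum_ite_lt (f := fun p q => d (x p) (x q))
    (fun _ _ => hsymm _ _) (fun _ => hdiag _)
  have hyy := sum_sum_eq_two_nsmul_sum_sum_ite_lt (f := fun p q => d (y p) (y q))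
    (fun _ _ => hsymm _ _) (fun _ => hdiag _)
  have hyx : ∑ p, ∑ q, d (y p) (x q) = ∑ p, ∑ q, d (x p) (y q) := by
    rw [sum_comm]; simp only [hsymm (y _)]
  simp only [Fin.sum_univ_add, Fin.append_left, Fin.append_right, one_mul, mul_one, neg_mul,
    mul_neg, sum_neg_distrib, sum_add_distrib, hxx, hyy, hyx, two_nsmul]
  ring

theorem qForm_swap (z w : Fin 3 → ℍ[ℝ]) : qForm w z = star (qForm z w) := by
  simp [qForm, star_add, star_mul]

theorem qForm_self (z : Fin 3 → ℍ[ℝ]) :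
    qForm z z = ((-normSq (z 0) + normSq (z 1) + normSq (z 2) : ℝ) : ℍ[ℝ]) := by
  simp [qForm, star_mul_self]

theorem qhypDist_comm (x y : Fin 3 → ℍ[ℝ]) : qhypDist x y = qhypDist y x := by
  rw [qhypDist, qhypDist, qForm_swap x y, norm_star, mul_comm]

theorem arcosh_one : arcosh 1 = 0 := by simp [arcosh]

theorem qhypDist_self (x : Fin 3 → ℍ[ℝ]) : qhypDist x x = 0 := by
  rw [qhypDist, qForm_self, norm_coe, re_coe, Real.sqrt_mul_self_eq_abs, Real.norm_eq_abs]
  rcases eq_or_ne (-normSq (x 0) + normSq (x 1) + normSq (x 2)) 0 with h | h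
  · simp [h, arcosh, Real.sqrt_eq_zero_of_nonpos]
  · rw [div_self (abs_ne_zero.2 h), arcosh_one]

theorem qhypDist_eq_arcosh_norm {x y : Fin 3 → ℍ[ℝ]} (hx : (qForm x x).re = -1)
    (hy : (qForm y y).re = -1) : qhypDist x y = arcosh ‖qForm x y‖ := by
  simp [qhypDist, hx, hy]

theorem norm_coe_add (r : ℝ) (a : ℍ[ℝ]) :
    ‖(r : ℍ[ℝ]) + a‖ = √(r ^ 2 + 2 * r * a.re + normSq a) := by
  rw [← Real.sqrt_mul_self (norm_nonneg _), ← normSq_eq_norm_mul_self, normSq_add, normSq_coe]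
  simp
  ring_nf

theorem three_eq_coe : (3 : ℍ[ℝ]) = ((3 : ℝ) : ℍ[ℝ]) := rfl

theorem re_qForm_self_line₁ (a : ℍ[ℝ]) : (qForm ![3, a, 0] ![3, a, 0]).re = normSq a - 9 := by
  simp only [qForm_self, re_coe, Matrix.cons_val_zero, Matrix.cons_val_one, Matrix.cons_val_two,
    Matrix.head_cons, Matrix.tail_cons, map_zero, three_eq_coe, Quaternion.normSq_coe]
  ring

theorem re_qForm_self_line₂ (a : ℍ[ℝ]) : (qForm ![3, 0, a] ![3, 0, a]).re = normSq a - 9 := by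
  simp only [qForm_self, re_coe, Matrix.cons_val_zero, Matrix.cons_val_one, Matrix.cons_val_two,
    Matrix.head_cons, Matrix.tail_cons, map_zero, three_eq_coe, Quaternion.normSq_coe]
  ring

theorem qForm_line₁ (a b : ℍ[ℝ]) :
    qForm ![3, a, 0] ![3, b, 0] = ((-9 : ℝ) : ℍ[ℝ]) + star a * b := by
  simp [qForm, three_eq_coe, ← Quaternion.coe_mul]
  norm_num

theorem qForm_line₂ (a b : ℍ[ℝ]) :
    qForm ![3, 0, a] ![3, 0, b] = ((-9 : ℝ) : ℍ[ℝ]) + star a * b := by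
  simp [qForm, three_eq_coe, ← Quaternion.coe_mul]
  norm_num

theorem qForm_line₁_line₂ (a b : ℍ[ℝ]) :
    qForm ![3, a, 0] ![3, 0, b] = ((-9 : ℝ) : ℍ[ℝ]) := by
  simp [qForm, three_eq_coe, ← Quaternion.coe_mul]
  norm_num

def qParamCoord : Fin 12 → Fin 4 → ℤ :=
  ![![1, 1, 0, 0], ![1, -1, 0, 0], ![1, 0, 1, 0], ![1, 0, -1, 0], ![1, 0, 0, 1], ![1, 0, 0, -1],
    ![-1, 1, 0, 0], ![-1, -1, 0, 0], ![-1, 0, 1, 0], ![-1, 0, -1, 0], ![-1, 0, 0, 1],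
    ![-1, 0, 0, -1]]

theorem qParam_eq_mk (p : Fin 12) :
    qParam p = ⟨2 * qParamCoord p 0, 2 * qParamCoord p 1, 2 * qParamCoord p 2,
      2 * qParamCoord p 3⟩ := by
  -- The literals `⟨a, b, c, d⟩` in `qParam` live in `QuaternionAlgebra ℝ (-1) 0 (-1)`, not
  -- syntactically in `ℍ[ℝ]`, so the `Quaternion` simp lemmas miss them; these restatements
  -- hold definitionally.
  have two_mul_mk (a b c d : ℝ) :
      (2 : ℍ[ℝ]) * ⟨a, b, c, d⟩ = ⟨2 * a, 2 * b, 2 * c, 2 * d⟩ :=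
    (QuaternionAlgebra.mk_mul_mk 2 0 0 0 a b c d).trans (by ext <;> simp)
  have add_mk (x : ℍ[ℝ]) (a b c d : ℝ) :
      x + ⟨a, b, c, d⟩ = ⟨x.re + a, x.imI + b, x.imJ + c, x.imK + d⟩ := rfl
  have sub_mk (x : ℍ[ℝ]) (a b c d : ℝ) :
      x - ⟨a, b, c, d⟩ = ⟨x.re - a, x.imI - b, x.imJ - c, x.imK - d⟩ := rfl
  have two_eq_coe : (2 : ℍ[ℝ]) = ((2 : ℝ) : ℍ[ℝ]) := rfl
  fin_cases p <;> simp only [qParam, two_mul_mk, add_mk, sub_mk] <;> ext <;>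
    simp [qParamCoord, two_eq_coe]

def qParamGram (p q : Fin 12) : ℤ := ∑ k, qParamCoord p k * qParamCoord q k

theorem re_star_qParam_mul (p q : Fin 12) :
    (star (qParam p) * qParam q).re = 4 * qParamGram p q := by
  rw [re_mul, re_star, imI_star, imJ_star, imK_star, qParam_eq_mk p, qParam_eq_mk q]
  simp only [qParamGram, Fin.sum_univ_four]
  push_cast
  ring

theorem map_qParamGram (p : Fin 12) :
    univ.val.map (qParamGram p) = {2, 0, 0, -2, 1, 1, 1, 1, -1, -1, -1, -1} := by
  revert p; decide

theorem sum_comp_qParamGram {M : Type*} [AddCommMonoid M] (f : ℤ → M) (p : Fin 12) :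
    ∑ q, f (qParamGram p q) = f 2 + 2 • f 0 + f (-2) + 4 • f 1 + 4 • f (-1) := by
  rw [sum_eq_multiset_sum, ← Function.comp_def, ← Multiset.map_map, map_qParamGram]
  simp
  abel

theorem qParamGram_self (p : Fin 12) : qParamGram p p = 2 := by
  revert p; decide

theorem normSq_qParam (p : Fin 12) : normSq (qParam p) = 8 := by
  have h := re_star_qParam_mul p p
  rw [star_mul_self, re_coe, qParamGram_self] at h
  norm_num [h]

theorem sum_arcosh_qParam (p : Fin 12) :
    ∑ q, arcosh √(145 - 18 * (star (qParam p) * qParam q).re) =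
      2 * arcosh √145 + arcosh √289 + 4 * arcosh √73 + 4 * arcosh √217 := by
  simp only [re_star_qParam_mul]
  rw [sum_comp_qParamGram (fun v => arcosh √(145 - 18 * (4 * (v : ℝ))))]
  norm_num [arcosh_one]

theorem norm_neg_nine_add_star_mul {a b : ℍ[ℝ]} (ha : normSq a = 8) (hb : normSq b = 8) :
    ‖((-9 : ℝ) : ℍ[ℝ]) + star a * b‖ = √(145 - 18 * (star a * b).re) := by
  rw [norm_coe_add, map_mul, normSq_star, ha, hb]
  ring_nf

theorem qhypDist_line₁ {a b : ℍ[ℝ]} (ha : normSq a = 8) (hb : normSq b = 8) :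
    qhypDist ![3, a, 0] ![3, b, 0] = arcosh √(145 - 18 * (star a * b).re) := by
  rw [qhypDist_eq_arcosh_norm (by rw [re_qForm_self_line₁, ha]; norm_num)
    (by rw [re_qForm_self_line₁, hb]; norm_num), qForm_line₁, norm_neg_nine_add_star_mul ha hb]

theorem qhypDist_line₂ {a b : ℍ[ℝ]} (ha : normSq a = 8) (hb : normSq b = 8) :
    qhypDist ![3, 0, a] ![3, 0, b] = arcosh √(145 - 18 * (star a * b).re) := by
  rw [qhypDist_eq_arcosh_norm (by rw [re_qForm_self_line₂, ha]; norm_num)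
    (by rw [re_qForm_self_line₂, hb]; norm_num), qForm_line₂, norm_neg_nine_add_star_mul ha hb]

theorem qhypDist_line₁_line₂ {a b : ℍ[ℝ]} (ha : normSq a = 8) (hb : normSq b = 8) :
    qhypDist ![3, a, 0] ![3, 0, b] = arcosh 9 := by
  rw [qhypDist_eq_arcosh_norm (by rw [re_qForm_self_line₁, ha]; norm_num)
    (by rw [re_qForm_self_line₂, hb]; norm_num), qForm_line₁_line₂, norm_coe]
  norm_num

theorem arcosh_sqrt {x : ℝ} (hx : 1 ≤ x) : arcosh √x = Real.log (√x + √(x - 1)) := by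
  rw [arcosh, Real.sq_sqrt (by linarith)]

theorem twelve_mul_arcosh_nine_lt :
    12 * arcosh 9 < 2 * arcosh √145 + arcosh √289 + 4 * arcosh √73 + 4 * arcosh √217 := by
  have b145 : (12.04159 : ℝ) < √145 := (Real.lt_sqrt (by norm_num)).2 (by norm_num)
  have b288 : (16.97056 : ℝ) < √288 := (Real.lt_sqrt (by norm_num)).2 (by norm_num)
  have b73 : (8.544 : ℝ) < √73 := (Real.lt_sqrt (by norm_num)).2 (by norm_num)
  have b72 : (8.48528 : ℝ) < √72 := (Real.lt_sqrt (by norm_num)).2 (by norm_num)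
  have b217 : (14.73091 : ℝ) < √217 := (Real.lt_sqrt (by norm_num)).2 (by norm_num)
  have b216 : (14.69693 : ℝ) < √216 := (Real.lt_sqrt (by norm_num)).2 (by norm_num)
  have b80 : √80 < 8.94428 := (Real.sqrt_lt' (by norm_num)).2 (by norm_num)
  have sqrt144 : √144 = 12 := by
    rw [show (144 : ℝ) = 12 ^ 2 by norm_num, Real.sqrt_sq (by norm_num)]
  have sqrt289 : √289 = 17 := by
    rw [show (289 : ℝ) = 17 ^ 2 by norm_num, Real.sqrt_sq (by norm_num)]
  have sqrt81 : √81 = 9 := by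
    rw [show (81 : ℝ) = 9 ^ 2 by norm_num, Real.sqrt_sq (by norm_num)]
  -- The two sides differ by only 0.3%, hence the five-digit bounds on the square roots.
  have hprod : (9 + √80) ^ 12 <
      (√145 + 12) ^ 2 * ((17 + √288) * ((√73 + √72) ^ 4 * (√217 + √216) ^ 4)) :=
    calc (9 + √80) ^ 12 ≤ (17.94428 : ℝ) ^ 12 := by gcongr; linarith
      _ < (24.04159 : ℝ) ^ 2 * (33.97056 * (17.02928 ^ 4 * 29.42784 ^ 4)) := by norm_num
      _ ≤ _ := by gcongr <;> linarith
  have hlog := Real.log_lt_log (by positivity) hprod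
  rw [Real.log_pow, Real.log_mul (by positivity) (by positivity),
    Real.log_mul (by positivity) (by positivity), Real.log_mul (by positivity) (by positivity),
    Real.log_pow, Real.log_pow, Real.log_pow] at hlog
  rw [← sqrt81, arcosh_sqrt (by norm_num), arcosh_sqrt (by norm_num), arcosh_sqrt (by norm_num),
    arcosh_sqrt (by norm_num), arcosh_sqrt (by norm_num)]
  norm_num [sqrt144, sqrt289, sqrt81]
  push_cast at hlog
  linarith

theorem sum_qhypDist_pairs_sub_cross_pos :
    0 < (∑ p, ∑ q, if p < q then qhypDist ![3, qParam p, 0] ![3, qParam q, 0] else 0) +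
      (∑ p, ∑ q, if p < q then qhypDist ![3, 0, qParam p] ![3, 0, qParam q] else 0) -
      ∑ p, ∑ q, qhypDist ![3, qParam p, 0] ![3, 0, qParam q] := by
  have hxx := sum_sum_eq_two_nsmul_sum_sum_ite_lt
    (f := fun p q => qhypDist ![3, qParam p, 0] ![3, qParam q, 0])
    (fun _ _ => qhypDist_comm _ _) (fun _ => qhypDist_self _)
  simp only [qhypDist_line₁ (normSq_qParam _) (normSq_qParam _),
    qhypDist_line₂ (normSq_qParam _) (normSq_qParam _),
    qhypDist_line₁_line₂ (normSq_qParam _) (normSq_qParam _), sum_arcosh_qParam, sum_const,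
    card_univ, Fintype.card_fin, nsmul_eq_mul] at hxx ⊢
  push_cast at hxx ⊢
  linarith [twelve_mul_arcosh_nine_lt]

/-- For the 24 points `x^σ_ε = (3, 2σ+2ε, 0)` and `y^σ_ε = (3, 0, 2σ+2ε)` in the
quaternionic hyperbolic plane `H²_ℍ` (`σ ∈ {±1}`, `ε ∈ {±i,±j,±k}`), one has
`∑ d(x,x′) + ∑ d(y,y′) − ∑ d(x,y′) > 0` (same-type sums over unordered pairs,
mixed sum over all ordered pairs); hence the geodesic distance on `H²_ℍ` is not
a kernel of negative type. -/
theorem quaternionic_hyperbolic_not_negative_type :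
    (let x : Fin 12 → (Fin 3 → Quaternion ℝ) := fun p => ![3, qParam p, 0]
     let y : Fin 12 → (Fin 3 → Quaternion ℝ) := fun p => ![3, 0, qParam p]
     0 < (∑ p, ∑ q, if p < q then qhypDist (x p) (x q) else 0) +
         (∑ p, ∑ q, if p < q then qhypDist (y p) (y q) else 0) -
         ∑ p, ∑ q, qhypDist (x p) (y q)) ∧
    ¬ (∀ (m : ℕ) (z : Fin m → (Fin 3 → Quaternion ℝ)) (t : Fin m → ℝ),
        (∀ i, (qForm (z i) (z i)).re < 0) → (∑ i, t i) = 0 →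
        ∑ i, ∑ j, t i * t j * qhypDist (z i) (z j) ≤ 0) := by
  refine ⟨sum_qhypDist_pairs_sub_cross_pos, fun h => ?_⟩
  have hneg : ∀ i, (qForm (Fin.append (fun p => ![3, qParam p, 0]) (fun p => ![3, 0, qParam p]) i)
      (Fin.append (fun p => ![3, qParam p, 0]) (fun p => ![3, 0, qParam p]) i)).re < 0 := by
    refine Fin.addCases (fun p => ?_) (fun p => ?_) <;>
      simp only [Fin.append_left, Fin.append_right, re_qForm_self_line₁, re_qForm_self_line₂,
        normSq_qParam] <;> norm_num
  have hsum : ∑ i, Fin.append (fun _ : Fin 12 => (1 : ℝ)) (fun _ : Fin 12 => -1) i = 0 := by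
    rw [Fin.sum_univ_add]
    simp only [Fin.append_left, Fin.append_right, sum_const, card_univ, Fintype.card_fin]
    norm_num
  have := h _ _ _ hneg hsum
  rw [sum_sum_append_sign_mul qhypDist_comm qhypDist_self] at this
  linarith [sum_qhypDist_pairs_sub_cross_pos]
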